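/- arXiv:2502.12695 — 14 statements merged into one kernel-verified Lean document; each statement's English description precedes it below -/
import Mathlib

section
/- In any category C, the composite of two extensive morphisms is extensive: if f : X → Y and g : Y → Z are both extensive, then g ∘ f : X → Z is extensive. -/
open CategoryTheory CategoryTheory.Limits

universe v u

variable {C : Type u} [Category.{v} C]

/-- `i₁ : X₁ ⟶ X` and `i₂ : X₂ ⟶ X` form a binary coproduct diagram. -/
def IsCoprodDiagram {X₁ X₂ X : C} (i₁ : X₁ ⟶ X) (i₂ : X₂ ⟶ X) : Prop :=
  Nonempty (IsColimit (BinaryCofan.mk i₁ i₂))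

/-- `p₁ : X ⟶ X₁` and `p₂ : X ⟶ X₂` form a binary product diagram. -/
def IsProdDiagram {X X₁ X₂ : C} (p₁ : X ⟶ X₁) (p₂ : X ⟶ X₂) : Prop :=
  Nonempty (IsLimit (BinaryFan.mk p₁ p₂))

/-- Condition (E1): pullbacks of `f` along both inclusions of any binary coproduct diagram
exist and the resulting legs form a binary coproduct diagram. -/
def SatE1 {A X : C} (f : A ⟶ X) : Prop :=
  ∀ {X₁ X₂ : C} (x₁ : X₁ ⟶ X) (x₂ : X₂ ⟶ X), IsCoprodDiagram x₁ x₂ →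
    ∃ (A₁ A₂ : C) (a₁ : A₁ ⟶ A) (a₂ : A₂ ⟶ A) (f₁ : A₁ ⟶ X₁) (f₂ : A₂ ⟶ X₂),
      IsPullback a₁ f₁ f x₁ ∧ IsPullback a₂ f₂ f x₂ ∧ IsCoprodDiagram a₁ a₂

/-- Condition (E2): in any commutative diagram over `f` whose rows are binary coproduct
diagrams, both squares are pullbacks. -/
def SatE2 {A X : C} (f : A ⟶ X) : Prop :=
  ∀ {A₁ A₂ X₁ X₂ : C} (a₁ : A₁ ⟶ A) (a₂ : A₂ ⟶ A) (x₁ : X₁ ⟶ X) (x₂ : X₂ ⟶ X)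
    (f₁ : A₁ ⟶ X₁) (f₂ : A₂ ⟶ X₂),
    a₁ ≫ f = f₁ ≫ x₁ → a₂ ≫ f = f₂ ≫ x₂ →
    IsCoprodDiagram x₁ x₂ → IsCoprodDiagram a₁ a₂ →
    IsPullback a₁ f₁ f x₁ ∧ IsPullback a₂ f₂ f x₂

/-- A morphism is extensive if it satisfies (E1) and (E2). -/
def Extensive {A X : C} (f : A ⟶ X) : Prop := SatE1 f ∧ SatE2 f

/-- Condition (C1): pushouts of `f` along both projections of any binary product diagram
exist and the resulting legs form a binary product diagram. -/
def SatC1 {A X : C} (f : A ⟶ X) : Prop :=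
  ∀ {A₁ A₂ : C} (p₁ : A ⟶ A₁) (p₂ : A ⟶ A₂), IsProdDiagram p₁ p₂ →
    ∃ (X₁ X₂ : C) (q₁ : X ⟶ X₁) (q₂ : X ⟶ X₂) (f₁ : A₁ ⟶ X₁) (f₂ : A₂ ⟶ X₂),
      IsPushout p₁ f f₁ q₁ ∧ IsPushout p₂ f f₂ q₂ ∧ IsProdDiagram q₁ q₂

/-- Condition (C2): in any commutative diagram over `f` whose rows are binary product
diagrams, both squares are pushouts. -/
def SatC2 {A X : C} (f : A ⟶ X) : Prop :=
  ∀ {A₁ A₂ X₁ X₂ : C} (p₁ : A ⟶ A₁) (p₂ : A ⟶ A₂) (q₁ : X ⟶ X₁) (q₂ : X ⟶ X₂)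
    (f₁ : A₁ ⟶ X₁) (f₂ : A₂ ⟶ X₂),
    p₁ ≫ f₁ = f ≫ q₁ → p₂ ≫ f₂ = f ≫ q₂ →
    IsProdDiagram p₁ p₂ → IsProdDiagram q₁ q₂ →
    IsPushout p₁ f f₁ q₁ ∧ IsPushout p₂ f f₂ q₂

/-- A morphism is coextensive if it satisfies (C1) and (C2). -/
def Coextensive {A X : C} (f : A ⟶ X) : Prop := SatC1 f ∧ SatC2 f

/-- A coproduct inclusion: a morphism admitting a complementary inclusion forming
a binary coproduct diagram. -/
def IsCoprodInclusion {A X : C} (ι : A ⟶ X) : Prop :=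
  ∃ (A' : C) (ι' : A' ⟶ X), IsCoprodDiagram ι ι'

/-- An extremal epimorphism: whenever `e = i ≫ m` with `m` a monomorphism, `m` is an
isomorphism. -/
def IsExtremalEpi {A B : C} (e : A ⟶ B) : Prop :=
  ∀ {I : C} (i : A ⟶ I) (m : I ⟶ B), Mono m → i ≫ m = e → IsIso m

/-- The binary strict refinement property for an object `X`. -/
def BinaryStrictRefinement (X : C) : Prop :=
  ∀ {A₁ A₂ B₁ B₂ : C} (a₁ : X ⟶ A₁) (a₂ : X ⟶ A₂) (b₁ : X ⟶ B₁) (b₂ : X ⟶ B₂),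
    IsProdDiagram a₁ a₂ → IsProdDiagram b₁ b₂ →
    ∃ (C₁₁ C₁₂ C₂₁ C₂₂ : C)
      (α₁₁ : A₁ ⟶ C₁₁) (α₁₂ : A₁ ⟶ C₁₂) (α₂₁ : A₂ ⟶ C₂₁) (α₂₂ : A₂ ⟶ C₂₂)
      (β₁₁ : B₁ ⟶ C₁₁) (β₁₂ : B₂ ⟶ C₁₂) (β₂₁ : B₁ ⟶ C₂₁) (β₂₂ : B₂ ⟶ C₂₂),
      a₁ ≫ α₁₁ = b₁ ≫ β₁₁ ∧ a₁ ≫ α₁₂ = b₂ ≫ β₁₂ ∧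
      a₂ ≫ α₂₁ = b₁ ≫ β₂₁ ∧ a₂ ≫ α₂₂ = b₂ ≫ β₂₂ ∧
      IsProdDiagram α₁₁ α₁₂ ∧ IsProdDiagram α₂₁ α₂₂ ∧
      IsProdDiagram β₁₁ β₂₁ ∧ IsProdDiagram β₁₂ β₂₂

/-- A jointly monomorphic pair which is a reflexive, symmetric and transitive relation. -/
def IsEquivalenceRelationPair {R X : C} (r₁ r₂ : R ⟶ X) : Prop :=
  (∀ {T : C} (a b : T ⟶ R), a ≫ r₁ = b ≫ r₁ → a ≫ r₂ = b ≫ r₂ → a = b) ∧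
  (∃ d : X ⟶ R, d ≫ r₁ = 𝟙 X ∧ d ≫ r₂ = 𝟙 X) ∧
  (∃ s : R ⟶ R, s ≫ r₁ = r₂ ∧ s ≫ r₂ = r₁) ∧
  (∀ {P : C} (p₁ p₂ : P ⟶ R), IsPullback p₁ p₂ r₂ r₁ →
    ∃ t : P ⟶ R, t ≫ r₁ = p₁ ≫ r₁ ∧ t ≫ r₂ = p₂ ≫ r₂)

/-- The composite of two extensive morphisms is extensive. -/
theorem composite_extensive {X Y Z : C} (f : X ⟶ Y) (g : Y ⟶ Z)
    (hf : Extensive f) (hg : Extensive g) : Extensive (f ≫ g) := by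
  constructor
  · -- (E1)
    intro Z₁ Z₂ z₁ z₂ hz
    obtain ⟨Y₁, Y₂, b₁, b₂, g₁, g₂, pg₁, pg₂, hb⟩ := hg.1 z₁ z₂ hz
    obtain ⟨X₁, X₂, a₁, a₂, f₁, f₂, pf₁, pf₂, ha⟩ := hf.1 b₁ b₂ hb
    exact ⟨X₁, X₂, a₁, a₂, f₁ ≫ g₁, f₂ ≫ g₂,
      pf₁.paste_vert pg₁, pf₂.paste_vert pg₂, ha⟩
  · -- (E2)
    intro A₁ A₂ Z₁ Z₂ a₁ a₂ z₁ z₂ h₁ h₂ hc₁ hc₂ hz ha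
    obtain ⟨Y₁, Y₂, b₁, b₂, g₁, g₂, pg₁, pg₂, hb⟩ := hg.1 z₁ z₂ hz
    have w₁ : (a₁ ≫ f) ≫ g = h₁ ≫ z₁ := by rw [Category.assoc, hc₁]
    have w₂ : (a₂ ≫ f) ≫ g = h₂ ≫ z₂ := by rw [Category.assoc, hc₂]
    let u₁ : A₁ ⟶ Y₁ := pg₁.lift (a₁ ≫ f) h₁ w₁
    let u₂ : A₂ ⟶ Y₂ := pg₂.lift (a₂ ≫ f) h₂ w₂
    obtain ⟨q₁, q₂⟩ := hf.2 a₁ a₂ b₁ b₂ u₁ u₂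
      (pg₁.lift_fst _ _ _).symm (pg₂.lift_fst _ _ _).symm hb ha
    constructor
    · have := q₁.paste_vert pg₁
      rwa [pg₁.lift_snd] at this
    · have := q₂.paste_vert pg₂
      rwa [pg₂.lift_snd] at this
end

section
/- Let C be a category with binary coproducts. Then every morphism of C is extensive if and only if every split epimorphism and every coproduct inclusion in C is extensive. -/
open CategoryTheory CategoryTheory.Limits

universe v u

variable {C : Type u} [Category.{v} C]

theorem extensive_comp {A B X : C} {g : A ⟶ B} {h : B ⟶ X}
    (hg : Extensive g) (hh : Extensive h) : Extensive (g ≫ h) := by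
  constructor
  · intro X₁ X₂ x₁ x₂ hx
    obtain ⟨B₁, B₂, β₁, β₂, g₁, g₂, pb₁, pb₂, hcop⟩ := hh.1 x₁ x₂ hx
    obtain ⟨A₁, A₂, a₁, a₂, b₁, b₂, pa₁, pa₂, hacop⟩ := hg.1 β₁ β₂ hcop
    exact ⟨A₁, A₂, a₁, a₂, b₁ ≫ g₁, b₂ ≫ g₂, pa₁.paste_vert pb₁, pa₂.paste_vert pb₂, hacop⟩
  · intro A₁ A₂ X₁ X₂ a₁ a₂ x₁ x₂ f₁ f₂ w₁ w₂ hx ha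
    obtain ⟨B₁, B₂, β₁, β₂, g₁, g₂, pb₁, pb₂, hcop⟩ := hh.1 x₁ x₂ hx
    have e₁ : (a₁ ≫ g) ≫ h = f₁ ≫ x₁ := by rw [Category.assoc]; exact w₁
    have e₂ : (a₂ ≫ g) ≫ h = f₂ ≫ x₂ := by rw [Category.assoc]; exact w₂
    obtain ⟨pg₁, pg₂⟩ := hg.2 a₁ a₂ β₁ β₂ (pb₁.lift (a₁ ≫ g) f₁ e₁) (pb₂.lift (a₂ ≫ g) f₂ e₂)
      (pb₁.lift_fst _ _ _).symm (pb₂.lift_fst _ _ _).symm hcop ha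
    constructor
    · have := pg₁.paste_vert pb₁
      rwa [pb₁.lift_snd] at this
    · have := pg₂.paste_vert pb₂
      rwa [pb₂.lift_snd] at this

/-- A category with binary coproducts is extensive iff every split epimorphism and every
coproduct inclusion is extensive. -/
theorem extensive_iff_splitEpi_and_inclusions [HasBinaryCoproducts C] :
    (∀ {A X : C} (f : A ⟶ X), Extensive f) ↔
      ((∀ {A X : C} (f : A ⟶ X), IsSplitEpi f → Extensive f) ∧
        (∀ {A X : C} (ι : A ⟶ X), IsCoprodInclusion ι → Extensive ι)) := by
  constructor
  · intro H
    exact ⟨fun f _ => H f, fun ι _ => H ι⟩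
  · rintro ⟨hs, hi⟩ A X f
    have h1 : IsCoprodInclusion (coprod.inl : A ⟶ A ⨿ X) :=
      ⟨X, coprod.inr, ⟨coprodIsCoprod A X⟩⟩
    have h2 : IsSplitEpi (coprod.desc f (𝟙 X)) :=
      ⟨⟨⟨coprod.inr, coprod.inr_desc _ _⟩⟩⟩
    have := extensive_comp (hi _ h1) (hs _ h2)
    rwa [coprod.inl_desc] at this
end

section
/- Let f : X → Y and g : Y → Z be morphisms in a category C such that g ∘ f is extensive. Suppose that for every binary coproduct diagram Y₁ → Y ← Y₂ there exists a pair of pullback squares with vertical morphisms g₁ : Y₁ → Z₁, g : Y → Z, g₂ : Y₂ → Z₂, whose top row is Y₁ → Y ← Y₂ and whose bottom row Z₁ → Z ← Z₂ is a binary coproduct diagram. Then f is extensive. -/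
open CategoryTheory CategoryTheory.Limits

universe v u

variable {C : Type u} [Category.{v} C]

/-- If `f ≫ g` is extensive and `g` admits compatible pullback squares over every binary
coproduct decomposition of its domain, then `f` is extensive. -/
theorem extensive_of_comp_extensive {X Y Z : C} (f : X ⟶ Y) (g : Y ⟶ Z)
    (hgf : Extensive (f ≫ g))
    (h : ∀ {Y₁ Y₂ : C} (y₁ : Y₁ ⟶ Y) (y₂ : Y₂ ⟶ Y), IsCoprodDiagram y₁ y₂ →
      ∃ (Z₁ Z₂ : C) (z₁ : Z₁ ⟶ Z) (z₂ : Z₂ ⟶ Z) (g₁ : Y₁ ⟶ Z₁) (g₂ : Y₂ ⟶ Z₂),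
        IsPullback y₁ g₁ g z₁ ∧ IsPullback y₂ g₂ g z₂ ∧ IsCoprodDiagram z₁ z₂) :
    Extensive f := by
  constructor
  · intro Y₁ Y₂ y₁ y₂ hy
    obtain ⟨Z₁, Z₂, z₁, z₂, g₁, g₂, pb₁, pb₂, hz⟩ := h y₁ y₂ hy
    obtain ⟨X₁, X₂, x₁, x₂, k₁, k₂, big₁, big₂, hx⟩ := hgf.1 z₁ z₂ hz
    refine ⟨X₁, X₂, x₁, x₂,
      pb₁.lift (x₁ ≫ f) k₁ (by rw [Category.assoc, big₁.w]),
      pb₂.lift (x₂ ≫ f) k₂ (by rw [Category.assoc, big₂.w]),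
      IsPullback.of_bot' big₁ pb₁, IsPullback.of_bot' big₂ pb₂, hx⟩
  · intro A₁ A₂ Y₁ Y₂ a₁ a₂ y₁ y₂ f₁ f₂ w₁ w₂ hy ha
    obtain ⟨Z₁, Z₂, z₁, z₂, g₁, g₂, pb₁, pb₂, hz⟩ := h y₁ y₂ hy
    obtain ⟨big₁, big₂⟩ := hgf.2 a₁ a₂ z₁ z₂ (f₁ ≫ g₁) (f₂ ≫ g₂)
      (by rw [← Category.assoc, w₁, Category.assoc, Category.assoc, pb₁.w])
      (by rw [← Category.assoc, w₂, Category.assoc, Category.assoc, pb₂.w])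
      hz ha
    exact ⟨IsPullback.of_bot big₁ w₁ pb₁, IsPullback.of_bot big₂ w₂ pb₂⟩
end

section
/- Let C be a category with binary coproducts and let ι : Y → Z be a coproduct inclusion which satisfies (E2). Then for every binary coproduct diagram Y₁ → Y ← Y₂ there exists a pair of pullback squares with vertical morphisms ι₁ : Y₁ → Z₁, ι : Y → Z, ι₂ : Y₂ → Z₂, whose top row is Y₁ → Y ← Y₂ and whose bottom row Z₁ → Z ← Z₂ is a binary coproduct diagram. -/
open CategoryTheory CategoryTheory.Limits

universe v u

variable {C : Type u} [Category.{v} C]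

/-! Split `Z = Y ⨿ Y'` and `Y = Y₁ ⨿ Y₂`, and regroup `Z` as `(Y₁ ⨿ Y') ⨿ Y₂`. Over this bottom
row the top row `Y₁ → Y ← Y₂` sits in two commutative squares, with vertical maps `coprod.inl` and
`𝟙 Y₂`, and (E2) says exactly that they are pullbacks. -/

theorem isCoprodDiagram_iff_existsUnique {X₁ X₂ X : C} (i₁ : X₁ ⟶ X) (i₂ : X₂ ⟶ X) :
    IsCoprodDiagram i₁ i₂ ↔
      ∀ {T : C} (f₁ : X₁ ⟶ T) (f₂ : X₂ ⟶ T), ∃! d : X ⟶ T, i₁ ≫ d = f₁ ∧ i₂ ≫ d = f₂ := by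
  constructor
  · rintro ⟨h⟩ T f₁ f₂
    exact ⟨BinaryCofan.IsColimit.desc h f₁ f₂,
      ⟨BinaryCofan.IsColimit.inl_desc h f₁ f₂, BinaryCofan.IsColimit.inr_desc h f₁ f₂⟩,
      fun d hd => BinaryCofan.IsColimit.hom_ext h
        (hd.1.trans (BinaryCofan.IsColimit.inl_desc h f₁ f₂).symm)
        (hd.2.trans (BinaryCofan.IsColimit.inr_desc h f₁ f₂).symm)⟩
  · intro h
    choose d hd huniq using @h
    exact ⟨BinaryCofan.IsColimit.mk _ d (fun f₁ f₂ => (hd f₁ f₂).1) (fun f₁ f₂ => (hd f₁ f₂).2)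
      (fun f₁ f₂ m h₁ h₂ => huniq f₁ f₂ m ⟨h₁, h₂⟩)⟩

theorem IsCoprodDiagram.regroup {Y₁ Y₂ Y Y' Z W : C} {y₁ : Y₁ ⟶ Y} {y₂ : Y₂ ⟶ Y}
    {ι : Y ⟶ Z} {ι' : Y' ⟶ Z} {w₁ : Y₁ ⟶ W} {w' : Y' ⟶ W} {z₁ : W ⟶ Z}
    (hY : IsCoprodDiagram y₁ y₂) (hZ : IsCoprodDiagram ι ι') (hW : IsCoprodDiagram w₁ w')
    (h₁ : w₁ ≫ z₁ = y₁ ≫ ι) (h' : w' ≫ z₁ = ι') :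
    IsCoprodDiagram z₁ (y₂ ≫ ι) := by
  rw [isCoprodDiagram_iff_existsUnique] at hY hZ hW ⊢
  intro T g₁ g₂
  obtain ⟨e, ⟨he₁, he₂⟩, -⟩ := hY (w₁ ≫ g₁) g₂
  obtain ⟨d, ⟨hdι, hdι'⟩, -⟩ := hZ e (w' ≫ g₁)
  refine ⟨d, ⟨?_, by rw [Category.assoc, hdι, he₂]⟩, ?_⟩
  · exact (hW (w₁ ≫ g₁) (w' ≫ g₁)).unique
      ⟨by rw [reassoc_of% h₁, hdι, he₁], by rw [reassoc_of% h', hdι']⟩ ⟨rfl, rfl⟩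
  · rintro m ⟨hm₁, hm₂⟩
    have hιm : ι ≫ m = e := (hY (w₁ ≫ g₁) g₂).unique
      ⟨by rw [← hm₁, reassoc_of% h₁], by rw [← hm₂, Category.assoc]⟩ ⟨he₁, he₂⟩
    exact (hZ e (w' ≫ g₁)).unique ⟨hιm, by rw [← hm₁, reassoc_of% h']⟩ ⟨hdι, hdι'⟩

theorem isCoprodDiagram_coprod_inl_inr [HasBinaryCoproducts C] (X₁ X₂ : C) :
    IsCoprodDiagram (coprod.inl : X₁ ⟶ X₁ ⨿ X₂) coprod.inr :=
  ⟨coprodIsCoprod X₁ X₂⟩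

/-- A coproduct inclusion satisfying (E2) admits, over every binary coproduct decomposition
of its domain, a pair of pullback squares whose bottom row is a binary coproduct diagram. -/
theorem coprodInclusion_satE2_pullback_squares [HasBinaryCoproducts C] {Y Z : C}
    (ι : Y ⟶ Z) (hinc : IsCoprodInclusion ι) (hE2 : SatE2 ι) :
    ∀ {Y₁ Y₂ : C} (y₁ : Y₁ ⟶ Y) (y₂ : Y₂ ⟶ Y), IsCoprodDiagram y₁ y₂ →
      ∃ (Z₁ Z₂ : C) (z₁ : Z₁ ⟶ Z) (z₂ : Z₂ ⟶ Z) (ι₁ : Y₁ ⟶ Z₁) (ι₂ : Y₂ ⟶ Z₂),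
        IsPullback y₁ ι₁ ι z₁ ∧ IsPullback y₂ ι₂ ι z₂ ∧ IsCoprodDiagram z₁ z₂ := by
  obtain ⟨Y', ι', hZ⟩ := hinc
  intro Y₁ Y₂ y₁ y₂ hY
  have hbottom : IsCoprodDiagram (coprod.desc (y₁ ≫ ι) ι') (y₂ ≫ ι) :=
    hY.regroup hZ (isCoprodDiagram_coprod_inl_inr Y₁ Y') (coprod.inl_desc _ _)
      (coprod.inr_desc _ _)
  obtain ⟨hpb₁, hpb₂⟩ := hE2 y₁ y₂ _ _ coprod.inl (𝟙 Y₂)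
    (coprod.inl_desc _ _).symm (Category.id_comp _).symm hbottom hY
  exact ⟨_, _, _, _, _, _, hpb₁, hpb₂, hbottom⟩
end

section
/- Let C be a category with binary products. Every isomorphism in C satisfies (C2) if and only if the following condition holds: for any two morphisms f₁ : A₁ → B₁ and f₂ : A₂ → B₂ in C, if the product morphism f₁ × f₂ : A₁ × A₂ → B₁ × B₂ is an isomorphism, then f₁ and f₂ are isomorphisms. -/
open CategoryTheory CategoryTheory.Limits

universe v u

variable {C : Type u} [Category.{v} C]

/-!
A morphism `f` between two binary product diagrams is isomorphic, as an arrow, to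
`prod.map f₁ f₂` of its components. A commutative square whose vertical sides are
isomorphisms is a pushout, and in a pushout the side opposite an isomorphism is an
isomorphism; so for `f` invertible, (C2) says exactly that `f₁` and `f₂` are invertible.
-/

lemma isIso_prod_lift_of_isProdDiagram [HasBinaryProducts C] {A A₁ A₂ : C}
    {p₁ : A ⟶ A₁} {p₂ : A ⟶ A₂} (hp : IsProdDiagram p₁ p₂) : IsIso (prod.lift p₁ p₂) := by
  obtain ⟨hA⟩ := hp
  have hlift : (hA.conePointUniqueUpToIso (prodIsProd A₁ A₂)).hom = prod.lift p₁ p₂ := by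
    apply prod.hom_ext
    · rw [prod.lift_fst]; exact hA.conePointUniqueUpToIso_hom_comp (prodIsProd A₁ A₂) ⟨.left⟩
    · rw [prod.lift_snd]; exact hA.conePointUniqueUpToIso_hom_comp (prodIsProd A₁ A₂) ⟨.right⟩
  rw [← hlift]
  infer_instance

lemma isIso_prod_map_of_isIso [HasBinaryProducts C] {A X A₁ A₂ X₁ X₂ : C}
    {f : A ⟶ X} {p₁ : A ⟶ A₁} {p₂ : A ⟶ A₂} {q₁ : X ⟶ X₁} {q₂ : X ⟶ X₂}
    {f₁ : A₁ ⟶ X₁} {f₂ : A₂ ⟶ X₂} (w₁ : p₁ ≫ f₁ = f ≫ q₁) (w₂ : p₂ ≫ f₂ = f ≫ q₂)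
    (hp : IsProdDiagram p₁ p₂) (hq : IsProdDiagram q₁ q₂) [IsIso f] :
    IsIso (prod.map f₁ f₂) := by
  have := isIso_prod_lift_of_isProdDiagram hp
  have := isIso_prod_lift_of_isProdDiagram hq
  have hconj : prod.map f₁ f₂ = inv (prod.lift p₁ p₂) ≫ f ≫ prod.lift q₁ q₂ := by
    rw [IsIso.eq_inv_comp]
    apply prod.hom_ext <;> simp [← w₁, ← w₂]
  rw [hconj]
  infer_instance

/-- Every isomorphism satisfies (C2) iff products of morphisms reflect isomorphisms. -/
theorem iso_satC2_iff_prod_map_reflects_iso [HasBinaryProducts C] :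
    (∀ {A X : C} (f : A ⟶ X), IsIso f → SatC2 f) ↔
      (∀ {A₁ A₂ B₁ B₂ : C} (f₁ : A₁ ⟶ B₁) (f₂ : A₂ ⟶ B₂),
        IsIso (Limits.prod.map f₁ f₂) → IsIso f₁ ∧ IsIso f₂) := by
  constructor
  · intro hC2 A₁ A₂ B₁ B₂ f₁ f₂ hiso
    obtain ⟨h₁, h₂⟩ := hC2 (prod.map f₁ f₂) hiso prod.fst prod.snd prod.fst prod.snd f₁ f₂
      (by simp) (by simp) ⟨prodIsProd A₁ A₂⟩ ⟨prodIsProd B₁ B₂⟩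
    exact ⟨h₁.isIso_inl_of_isIso, h₂.isIso_inl_of_isIso⟩
  · intro hreflect A X f hf A₁ A₂ X₁ X₂ p₁ p₂ q₁ q₂ f₁ f₂ w₁ w₂ hp hq
    obtain ⟨_, _⟩ := hreflect f₁ f₂ (isIso_prod_map_of_isIso w₁ w₂ hp hq)
    exact ⟨IsPushout.of_vert_isIso ⟨w₁⟩, IsPushout.of_vert_isIso ⟨w₂⟩⟩
end

section
/- Let f : A → B be a morphism in a category C. If f satisfies (C1) and the identity morphism 1_B satisfies (C2), then f is coextensive. -/
open CategoryTheory CategoryTheory.Limits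

universe v u

variable {C : Type u} [Category.{v} C]

/-- If `f` satisfies (C1) and the identity on its codomain satisfies (C2), then `f` is
coextensive. -/
theorem coextensive_of_satC1_of_id_satC2 {A B : C} (f : A ⟶ B)
    (h1 : SatC1 f) (h2 : SatC2 (𝟙 B)) : Coextensive f := by
  refine ⟨h1, ?_⟩
  intro A₁ A₂ X₁ X₂ p₁ p₂ q₁ q₂ f₁ f₂ w₁ w₂ hp hq
  obtain ⟨Y₁, Y₂, r₁, r₂, g₁, g₂, s₁, s₂, hr⟩ := h1 p₁ p₂ hp
  set u₁ : Y₁ ⟶ X₁ := s₁.desc f₁ q₁ w₁ with hu₁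
  set u₂ : Y₂ ⟶ X₂ := s₂.desc f₂ q₂ w₂ with hu₂
  have e₁ : r₁ ≫ u₁ = 𝟙 B ≫ q₁ := by simp [hu₁]
  have e₂ : r₂ ≫ u₂ = 𝟙 B ≫ q₂ := by simp [hu₂]
  obtain ⟨t₁, t₂⟩ := h2 r₁ r₂ q₁ q₂ u₁ u₂ e₁ e₂ hr hq
  have P₁ := s₁.paste_vert t₁
  have P₂ := s₂.paste_vert t₂
  simp only [Category.comp_id] at P₁ P₂
  rw [s₁.inl_desc f₁ q₁ w₁] at P₁
  rw [s₂.inl_desc f₂ q₂ w₂] at P₂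
  exact ⟨P₁, P₂⟩
end

section
/- Let C be a category in which every identity morphism is coextensive. Then a morphism f : X → Y in C is coextensive if and only if it satisfies (C1). -/
open CategoryTheory CategoryTheory.Limits

universe v u

variable {C : Type u} [Category.{v} C]

/-- If every identity morphism is coextensive, then a morphism is coextensive iff it
satisfies (C1). -/
theorem coextensive_iff_satC1 (hid : ∀ X : C, Coextensive (𝟙 X))
    {X Y : C} (f : X ⟶ Y) : Coextensive f ↔ SatC1 f := by
  constructor
  · exact fun h => h.1
  · intro h1
    refine ⟨h1, ?_⟩
    intro A₁ A₂ X₁ X₂ p₁ p₂ q₁ q₂ f₁ f₂ c1 c2 hp hq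
    obtain ⟨Y₁, Y₂, q₁', q₂', g₁, g₂, P1, P2, hq'⟩ := h1 p₁ p₂ hp
    obtain ⟨PU1, PU2⟩ := (hid Y).2 q₁' q₂' q₁ q₂ (P1.desc f₁ q₁ c1) (P2.desc f₂ q₂ c2)
      (by simp) (by simp) hq' hq
    exact ⟨by simpa using P1.paste_vert PU1, by simpa using P2.paste_vert PU2⟩
end

section
/- Let C be a finitely complete category. Then every binary product projection in C is an extremal epimorphism if and only if every identity morphism in C is coextensive. -/
open CategoryTheory CategoryTheory.Limits

universe v u

variable {C : Type u} [Category.{v} C]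

/-! For `f = 𝟙 X` every square in (C1) and (C2) has an identity side, so it is a pushout exactly
when the opposite side is an isomorphism. Hence (C1) always holds for `𝟙 X`, and (C2) says: if
`(p₁, p₂)` and `(q₁, q₂)` are product diagrams on `X` with `q₁ = p₁ ≫ f₁`, then `f₁` is an
isomorphism.

If product projections are extremal epimorphisms, such an `f₁` is a monomorphism (because
`f₁ × f₂` is the identity of `X` and product projections are epimorphisms), and it is a factor of
the extremal epimorphism `q₁`, hence an isomorphism. Conversely, if a projection factors as
`p₁ = i ≫ m` with `m` mono, then `(i, p₂)` is again a product diagram on the same object, and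
(C2) applied to it forces `m` to be an isomorphism. -/

namespace IsProdDiagram

variable {X X₁ X₂ : C} {p₁ : X ⟶ X₁} {p₂ : X ⟶ X₂}

lemma hom_ext (h : IsProdDiagram p₁ p₂) {T : C} {a b : T ⟶ X}
    (h₁ : a ≫ p₁ = b ≫ p₁) (h₂ : a ≫ p₂ = b ≫ p₂) : a = b :=
  BinaryFan.IsLimit.hom_ext h.some h₁ h₂

lemma exists_lift (h : IsProdDiagram p₁ p₂) {T : C} (t₁ : T ⟶ X₁) (t₂ : T ⟶ X₂) :
    ∃ l : T ⟶ X, l ≫ p₁ = t₁ ∧ l ≫ p₂ = t₂ :=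
  let ⟨l, hl⟩ := BinaryFan.IsLimit.lift' h.some t₁ t₂
  ⟨l, hl⟩

lemma swap (h : IsProdDiagram p₁ p₂) : IsProdDiagram p₂ p₁ :=
  ⟨BinaryFan.isLimitFlip h.some⟩

lemma of_exists_lift
    (lift : ∀ {T : C} (t₁ : T ⟶ X₁) (t₂ : T ⟶ X₂), ∃ l : T ⟶ X, l ≫ p₁ = t₁ ∧ l ≫ p₂ = t₂)
    (ext : ∀ {T : C} (a b : T ⟶ X), a ≫ p₁ = b ≫ p₁ → a ≫ p₂ = b ≫ p₂ → a = b) :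
    IsProdDiagram p₁ p₂ :=
  ⟨BinaryFan.IsLimit.mk _ (fun t₁ t₂ => (lift t₁ t₂).choose)
    (fun t₁ t₂ => (lift t₁ t₂).choose_spec.1) (fun t₁ t₂ => (lift t₁ t₂).choose_spec.2)
    (fun t₁ t₂ _ h₁ h₂ => ext _ _ (h₁.trans (lift t₁ t₂).choose_spec.1.symm)
      (h₂.trans (lift t₁ t₂).choose_spec.2.symm))⟩

lemma of_fac_mono (h : IsProdDiagram p₁ p₂) {I : C} {i : X ⟶ I} {m : I ⟶ X₁} [Mono m]
    (fac : i ≫ m = p₁) : IsProdDiagram i p₂ := by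
  refine of_exists_lift (fun t₁ t₂ => ?_) (fun a b h₁ h₂ => h.hom_ext ?_ h₂)
  · obtain ⟨l, hl₁, hl₂⟩ := h.exists_lift (t₁ ≫ m) t₂
    exact ⟨l, by rw [← cancel_mono m, Category.assoc, fac, hl₁], hl₂⟩
  · rw [← fac, reassoc_of% h₁]

end IsProdDiagram

lemma IsExtremalEpi.epi [HasEqualizers C] {A B : C} {e : A ⟶ B} (h : IsExtremalEpi e) :
    Epi e :=
  (ExtremalEpi.mk_of_hasEqualizers e fun _ p i fac _ => h p i inferInstance fac).toEpi

lemma mono_of_isProdDiagram_of_comp_eq [HasBinaryProducts C] {X B₁ B₂ Y₁ Y₂ : C}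
    {r₁ : X ⟶ B₁} {r₂ : X ⟶ B₂} {s₁ : X ⟶ Y₁} {s₂ : X ⟶ Y₂} {g₁ : B₁ ⟶ Y₁} {g₂ : B₂ ⟶ Y₂}
    (hr : IsProdDiagram r₁ r₂) (hs : IsProdDiagram s₁ s₂) (w₁ : r₁ ≫ g₁ = s₁)
    (w₂ : r₂ ≫ g₂ = s₂) (hepi : ∀ S : C, Epi (prod.fst : S ⨯ B₂ ⟶ S)) : Mono g₁ := by
  constructor
  intro S u v huv
  obtain ⟨z, hz₁, hz₂⟩ := hr.exists_lift (prod.fst ≫ u) prod.snd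
  obtain ⟨z', hz'₁, hz'₂⟩ := hr.exists_lift (prod.fst ≫ v) prod.snd
  have hzz' : z = z' :=
    hs.hom_ext (by simp [← w₁, reassoc_of% hz₁, reassoc_of% hz'₁, huv])
      (by simp [← w₂, reassoc_of% hz₂, reassoc_of% hz'₂])
  rw [← cancel_epi (prod.fst : S ⨯ B₂ ⟶ S), ← hz₁, ← hz'₁, hzz']

lemma satC1_id (X : C) : SatC1 (𝟙 X) :=
  fun p₁ p₂ hp => ⟨_, _, p₁, p₂, 𝟙 _, 𝟙 _, .of_id_snd, .of_id_snd, hp⟩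

section ExtremalProjections

variable [HasEqualizers C] [HasBinaryProducts C]
  (hyp : ∀ {P X₁ X₂ : C} (p₁ : P ⟶ X₁) (p₂ : P ⟶ X₂), IsProdDiagram p₁ p₂ → IsExtremalEpi p₁)
include hyp

lemma isPushout_id_of_isExtremalEpi_projections {X A₁ A₂ X₁ X₂ : C}
    {p₁ : X ⟶ A₁} {p₂ : X ⟶ A₂} {q₁ : X ⟶ X₁} {q₂ : X ⟶ X₂} {f₁ : A₁ ⟶ X₁} {f₂ : A₂ ⟶ X₂}
    (w₁ : p₁ ≫ f₁ = 𝟙 X ≫ q₁) (w₂ : p₂ ≫ f₂ = 𝟙 X ≫ q₂)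
    (hp : IsProdDiagram p₁ p₂) (hq : IsProdDiagram q₁ q₂) : IsPushout p₁ (𝟙 X) f₁ q₁ := by
  rw [Category.id_comp] at w₁ w₂
  have : Mono f₁ := mono_of_isProdDiagram_of_comp_eq hp hq w₁ w₂
    fun S => IsExtremalEpi.epi (hyp _ _ (⟨prodIsProd S A₂⟩ : IsProdDiagram prod.fst prod.snd))
  have : IsIso f₁ := hyp q₁ q₂ hq p₁ f₁ inferInstance w₁
  exact .of_vert_isIso ⟨by simp [w₁]⟩

lemma satC2_id_of_isExtremalEpi_projections (X : C) : SatC2 (𝟙 X) :=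
  fun _ _ _ _ _ _ w₁ w₂ hp hq =>
    ⟨isPushout_id_of_isExtremalEpi_projections hyp w₁ w₂ hp hq,
      isPushout_id_of_isExtremalEpi_projections hyp w₂ w₁ hp.swap hq.swap⟩

end ExtremalProjections

lemma isExtremalEpi_of_satC2_id {P X₁ X₂ : C} (h : SatC2 (𝟙 P)) {p₁ : P ⟶ X₁} {p₂ : P ⟶ X₂}
    (hp : IsProdDiagram p₁ p₂) : IsExtremalEpi p₁ := by
  intro I i m _ fac
  have po := (h i p₂ p₁ p₂ m (𝟙 X₂) (by simp [fac]) (by simp) (hp.of_fac_mono fac) hp).1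
  exact po.isIso_inl_of_isIso

/-- In a finitely complete category, every binary product projection is an extremal
epimorphism iff every identity morphism is coextensive. -/
theorem extremal_projections_iff_id_coextensive [HasFiniteLimits C] :
    (∀ {P X₁ X₂ : C} (p₁ : P ⟶ X₁) (p₂ : P ⟶ X₂),
      IsProdDiagram p₁ p₂ → IsExtremalEpi p₁ ∧ IsExtremalEpi p₂) ↔
      (∀ X : C, Coextensive (𝟙 X)) := by
  constructor
  · intro hyp X
    exact ⟨satC1_id X, satC2_id_of_isExtremalEpi_projections (fun p₁ p₂ hp => (hyp p₁ p₂ hp).1) X⟩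
  · intro hco P X₁ X₂ p₁ p₂ hp
    exact ⟨isExtremalEpi_of_satC2_id (hco P).2 hp, isExtremalEpi_of_satC2_id (hco P).2 hp.swap⟩
end

section
/- Let C be a category with finite coproducts in which every coproduct inclusion satisfies (E2). Then coproducts in C are disjoint, and every coproduct inclusion in C is a regular monomorphism (indeed, an equaliser of a pair of morphisms). -/
/-!
Everything comes from (E2) applied to well-chosen diagrams. Given a coproduct `X₁ ⟶ X ⟵ X₂`,
the trivial coproduct `X₁ ⟶ X₁ ⟵ 0` lies over it via `𝟙, ι₁, 0 ⟶ X₂`; its two squares being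
pullbacks say that `ι₁` is a monomorphism and that `X₁ ×_X X₂ = 0`.
For a coproduct `ι : A ⟶ X ⟵ A' : ι'`, let `t : X ⟶ X ⨿ A'` be `ι ≫ inl` on `A` and `inr` on `A'`.
Then `t` is again a coproduct inclusion (complemented by `ι' ≫ inl`), and (E2) for `t` over the
coproduct `X ⟶ X ⨿ A' ⟵ A'` makes `A` the pullback of `t` and `inl` along the same map `ι`,
that is, their equaliser.
-/

open CategoryTheory CategoryTheory.Limits

universe v u

variable {C : Type u} [Category.{v} C]

namespace IsCoprodDiagram

variable {X₁ X₂ X : C} {i₁ : X₁ ⟶ X} {i₂ : X₂ ⟶ X}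

lemma exists_desc (hc : IsCoprodDiagram i₁ i₂) {W : C} (f₁ : X₁ ⟶ W) (f₂ : X₂ ⟶ W) :
    ∃ h : X ⟶ W, i₁ ≫ h = f₁ ∧ i₂ ≫ h = f₂ :=
  ⟨_, BinaryCofan.IsColimit.inl_desc hc.some f₁ f₂, BinaryCofan.IsColimit.inr_desc hc.some f₁ f₂⟩

lemma hom_ext (hc : IsCoprodDiagram i₁ i₂) {W : C} {f g : X ⟶ W} (h₁ : i₁ ≫ f = i₁ ≫ g)
    (h₂ : i₂ ≫ f = i₂ ≫ g) : f = g :=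
  BinaryCofan.IsColimit.hom_ext hc.some h₁ h₂

lemma of_exists_desc
    (desc : ∀ {W : C} (f₁ : X₁ ⟶ W) (f₂ : X₂ ⟶ W), ∃ h : X ⟶ W, i₁ ≫ h = f₁ ∧ i₂ ≫ h = f₂)
    (ext : ∀ {W : C} (f g : X ⟶ W), i₁ ≫ f = i₁ ≫ g → i₂ ≫ f = i₂ ≫ g → f = g) :
    IsCoprodDiagram i₁ i₂ :=
  ⟨BinaryCofan.isColimitMk (fun s => (desc s.inl s.inr).choose)
    (fun s => (desc s.inl s.inr).choose_spec.1) (fun s => (desc s.inl s.inr).choose_spec.2)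
    (fun s _ hm₁ hm₂ => ext _ _ (hm₁.trans (desc s.inl s.inr).choose_spec.1.symm)
      (hm₂.trans (desc s.inl s.inr).choose_spec.2.symm))⟩

lemma symm (hc : IsCoprodDiagram i₁ i₂) : IsCoprodDiagram i₂ i₁ :=
  ⟨BinaryCofan.isColimitFlip hc.some⟩

end IsCoprodDiagram

lemma isCoprodDiagram_id_of_isInitial {I : C} (hI : IsInitial I) (X : C) :
    IsCoprodDiagram (𝟙 X) (hI.to X) :=
  (BinaryCofan.isColimit_iff_isIso_inl hI (BinaryCofan.mk (𝟙 X) (hI.to X))).mpr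
    (inferInstanceAs (IsIso (𝟙 X)))

lemma isCoprodDiagram_of_comp_eq {A A' X Y : C} {ι : A ⟶ X} {ι' : A' ⟶ X}
    {k₁ : X ⟶ Y} {k₂ : A' ⟶ Y} (hc : IsCoprodDiagram ι ι') (hd : IsCoprodDiagram k₁ k₂)
    {t : X ⟶ Y} (ht₁ : ι ≫ t = ι ≫ k₁) (ht₂ : ι' ≫ t = k₂) :
    IsCoprodDiagram t (ι' ≫ k₁) := by
  refine .of_exists_desc (fun {W} f₁ f₂ => ?_) (fun f g hf₁ hf₂ => ?_)
  · obtain ⟨g, hg₁, hg₂⟩ := hc.exists_desc (ι ≫ f₁) f₂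
    obtain ⟨h, hh₁, hh₂⟩ := hd.exists_desc g (ι' ≫ f₁)
    refine ⟨h, hc.hom_ext ?_ ?_, by rw [Category.assoc, hh₁, hg₂]⟩
    · rw [reassoc_of% ht₁, hh₁, hg₁]
    · rw [reassoc_of% ht₂, hh₂]
  · rw [Category.assoc, Category.assoc] at hf₂
    refine hd.hom_ext (hc.hom_ext ?_ hf₂) ?_
    · rw [← reassoc_of% ht₁, ← reassoc_of% ht₁, hf₁]
    · rw [← reassoc_of% ht₂, ← reassoc_of% ht₂, hf₁]

section SatE2

variable [HasInitial C] {X₁ X₂ X : C} {ι₁ : X₁ ⟶ X} {ι₂ : X₂ ⟶ X}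

lemma SatE2.isPullback_id_and_initial (hE : SatE2 ι₁) (hc : IsCoprodDiagram ι₁ ι₂) :
    IsPullback (𝟙 X₁) (𝟙 X₁) ι₁ ι₁ ∧ IsPullback (initial.to X₁) (initial.to X₂) ι₁ ι₂ :=
  hE (𝟙 X₁) (initial.to X₁) ι₁ ι₂ (𝟙 X₁) (initial.to X₂) (by simp)
    (initialIsInitial.hom_ext _ _) hc (isCoprodDiagram_id_of_isInitial initialIsInitial X₁)

lemma SatE2.mono (hE : SatE2 ι₁) (hc : IsCoprodDiagram ι₁ ι₂) : Mono ι₁ :=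
  IsKernelPair.mono_of_eq_fst_snd' (hE.isPullback_id_and_initial hc).1

lemma SatE2.isPullback_initial (hE : SatE2 ι₁) (hc : IsCoprodDiagram ι₁ ι₂) :
    IsPullback (initial.to X₁) (initial.to X₂) ι₁ ι₂ :=
  (hE.isPullback_id_and_initial hc).2

end SatE2

noncomputable def CategoryTheory.IsPullback.regularMono {A X Y : C} {m : A ⟶ X} {f g : X ⟶ Y}
    (h : IsPullback m m f g) : RegularMono m where
  Z := Y
  left := f
  right := g
  w := h.w
  isLimit := Fork.IsLimit.mk' _ fun s =>
    ⟨h.lift s.ι s.ι s.condition, h.lift_fst _ _ _, fun hm =>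
      h.hom_ext (by simpa using hm) (by simpa using hm)⟩

lemma IsCoprodDiagram.nonempty_regularMono {A A' X : C} {ι : A ⟶ X} {ι' : A' ⟶ X}
    [HasBinaryCoproduct X A'] (hc : IsCoprodDiagram ι ι')
    (hE : ∀ {Y : C} (t : X ⟶ Y), IsCoprodInclusion t → SatE2 t) : Nonempty (RegularMono ι) := by
  obtain ⟨t, ht₁, ht₂⟩ := hc.exists_desc (ι ≫ coprod.inl) coprod.inr
  have hd : IsCoprodDiagram (coprod.inl : X ⟶ X ⨿ A') coprod.inr := ⟨coprodIsCoprod X A'⟩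
  have ht : IsCoprodInclusion t := ⟨A', ι' ≫ coprod.inl, isCoprodDiagram_of_comp_eq hc hd ht₁ ht₂⟩
  obtain ⟨hpb, -⟩ := hE t ht ι ι' coprod.inl coprod.inr ι (𝟙 A') ht₁
    (by rw [ht₂, Category.id_comp]) hd hc
  exact ⟨hpb.regularMono⟩

/-- If every coproduct inclusion satisfies (E2), then coproducts are disjoint and every
coproduct inclusion is a regular monomorphism. -/
theorem disjoint_and_regularMono_of_inclusions_satE2 [HasFiniteCoproducts C]
    (h : ∀ {A X : C} (ι : A ⟶ X), IsCoprodInclusion ι → SatE2 ι) :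
    (∀ {X₁ X₂ X : C} (ι₁ : X₁ ⟶ X) (ι₂ : X₂ ⟶ X), IsCoprodDiagram ι₁ ι₂ →
      Mono ι₁ ∧ Mono ι₂ ∧
      ∃ (P : C) (p₁ : P ⟶ X₁) (p₂ : P ⟶ X₂),
        IsPullback p₁ p₂ ι₁ ι₂ ∧ Nonempty (IsInitial P)) ∧
    (∀ {A X : C} (ι : A ⟶ X), IsCoprodInclusion ι → Nonempty (RegularMono ι)) := by
  refine ⟨fun ι₁ ι₂ hc => ?_, fun ι ⟨_, _, hc⟩ => hc.nonempty_regularMono (h ·)⟩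
  have hE₁ : SatE2 ι₁ := h ι₁ ⟨_, ι₂, hc⟩
  have hE₂ : SatE2 ι₂ := h ι₂ ⟨_, ι₁, hc.symm⟩
  exact ⟨hE₁.mono hc, hE₂.mono hc.symm, ⊥_ C, _, _, hE₁.isPullback_initial hc,
    ⟨initialIsInitial⟩⟩
end

section
/- Let C be a category with an initial object and binary coproducts in which coproducts are disjoint and every coproduct inclusion satisfies (E1). Then every morphism of C satisfying (E1) is extensive. -/
open CategoryTheory CategoryTheory.Limits

universe v u

variable {C : Type u} [Category.{v} C]

/-!
Pulling `f` back along `X₁ ⊔ X₂` gives a decomposition `B₁ ⊔ B₂` of `A`, and the squares of an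
(E2) diagram factor through it via comparison maps `hᵢ : Aᵢ ⟶ Bᵢ`; it suffices that these are
isomorphisms. Pull `b₁` back along `A₁ ⊔ A₂`. The part over `A₂` is initial: `a₂` factors through
the complementary summand `b₂`, and coproducts are disjoint. Hence `B₁` is the part over `A₁`,
which is `A₁` itself because `a₁` factors through the monomorphism `b₁`.
-/

def CoproductsDisjoint (C : Type u) [Category.{v} C] : Prop :=
  ∀ {X₁ X₂ X : C} (ι₁ : X₁ ⟶ X) (ι₂ : X₂ ⟶ X), IsCoprodDiagram ι₁ ι₂ →
    Mono ι₁ ∧ Mono ι₂ ∧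
    ∃ (P : C) (p₁ : P ⟶ X₁) (p₂ : P ⟶ X₂),
      IsPullback p₁ p₂ ι₁ ι₂ ∧ Nonempty (IsInitial P)

lemma IsCoprodDiagram.swap {X₁ X₂ X : C} {ι₁ : X₁ ⟶ X} {ι₂ : X₂ ⟶ X}
    (h : IsCoprodDiagram ι₁ ι₂) : IsCoprodDiagram ι₂ ι₁ :=
  ⟨BinaryCofan.isColimitFlip h.some⟩

lemma IsCoprodDiagram.isIso_inl_of_isInitial {X₁ X₂ X : C} {ι₁ : X₁ ⟶ X} {ι₂ : X₂ ⟶ X}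
    (h : IsCoprodDiagram ι₁ ι₂) (h₂ : IsInitial X₂) : IsIso ι₁ :=
  (BinaryCofan.isColimit_iff_isIso_inl h₂ (BinaryCofan.mk ι₁ ι₂)).1 h

lemma CategoryTheory.IsPullback.isIso_fst_of_factors_mono {P U B X : C} {fst : P ⟶ U}
    {snd : P ⟶ B} {u : U ⟶ X} {b : B ⟶ X} [Mono b] (hP : IsPullback fst snd u b) {h : U ⟶ B}
    (hu : h ≫ b = u) : IsIso fst := by
  have hid : IsPullback (𝟙 U) h u b := IsPullback.of_horiz_isIso_mono ⟨by simp [hu]⟩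
  rw [← hP.isoIsPullback_hom_fst _ _ hid, Category.comp_id]
  infer_instance

lemma CategoryTheory.IsPullback.of_isIso_lift {P P' X Y Z : C} {fst : P ⟶ X} {snd : P ⟶ Y}
    {f : X ⟶ Z} {g : Y ⟶ Z} (hP : IsPullback fst snd f g) {fst' : P' ⟶ X} {snd' : P' ⟶ Y}
    (w : fst' ≫ f = snd' ≫ g) [IsIso (hP.lift fst' snd' w)] : IsPullback fst' snd' f g :=
  hP.of_iso (asIso (hP.lift fst' snd' w)).symm (Iso.refl _) (Iso.refl _) (Iso.refl _)
    (by simp) (by simp) (by simp) (by simp)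

namespace CoproductsDisjoint

variable (hdisj : CoproductsDisjoint C)
include hdisj

lemma mono_inl {X₁ X₂ X : C} {ι₁ : X₁ ⟶ X} {ι₂ : X₂ ⟶ X} (h : IsCoprodDiagram ι₁ ι₂) :
    Mono ι₁ :=
  (hdisj ι₁ ι₂ h).1

lemma mono_inr {X₁ X₂ X : C} {ι₁ : X₁ ⟶ X} {ι₂ : X₂ ⟶ X} (h : IsCoprodDiagram ι₁ ι₂) :
    Mono ι₂ :=
  (hdisj ι₁ ι₂ h).2.1

lemma isInitial_of_isIso_inr {X₁ X₂ X : C} {ι₁ : X₁ ⟶ X} {ι₂ : X₂ ⟶ X}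
    (h : IsCoprodDiagram ι₁ ι₂) [IsIso ι₂] : Nonempty (IsInitial X₁) := by
  obtain ⟨-, -, P, p₁, p₂, hP, ⟨hPinit⟩⟩ := hdisj ι₁ ι₂ h
  have := hP.isIso_fst_of_isIso
  exact ⟨hPinit.ofIso (asIso p₁)⟩

lemma isInitial_of_isPullback_of_factors_inr {U X₁ X₂ X W : C} {ι₁ : X₁ ⟶ X} {ι₂ : X₂ ⟶ X}
    (hX : IsCoprodDiagram ι₁ ι₂) {u : U ⟶ X} (hu : SatE1 u) {h : U ⟶ X₂} (hhu : h ≫ ι₂ = u)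
    {fst : W ⟶ U} {snd : W ⟶ X₁} (hW : IsPullback fst snd u ι₁) : Nonempty (IsInitial W) := by
  obtain ⟨U₁, U₂, u₁, u₂, v₁, v₂, hU₁, hU₂, hU⟩ := hu ι₁ ι₂ hX
  have := hdisj.mono_inr hX
  have := hU₂.isIso_fst_of_factors_mono hhu
  obtain ⟨hU₁init⟩ := hdisj.isInitial_of_isIso_inr hU
  exact ⟨hU₁init.ofIso (hW.isoIsPullback _ _ hU₁).symm⟩

lemma isIso_of_comp_inl_eq_inl {A A₁ A₂ B₁ B₂ : C} {a₁ : A₁ ⟶ A} {a₂ : A₂ ⟶ A} {b₁ : B₁ ⟶ A}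
    {b₂ : B₂ ⟶ A} (hA : IsCoprodDiagram a₁ a₂) (hB : IsCoprodDiagram b₁ b₂)
    (ha₂ : SatE1 a₂) (hb₁ : SatE1 b₁) {h₁ : A₁ ⟶ B₁} {h₂ : A₂ ⟶ B₂}
    (e₁ : h₁ ≫ b₁ = a₁) (e₂ : h₂ ≫ b₂ = a₂) : IsIso h₁ := by
  obtain ⟨Q₁, Q₂, t₁, t₂, r₁, r₂, hQ₁, hQ₂, hQ⟩ := hb₁ a₁ a₂ hA
  obtain ⟨hQ₂init⟩ := hdisj.isInitial_of_isPullback_of_factors_inr hB ha₂ e₂ hQ₂.flip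
  have := hQ.isIso_inl_of_isInitial hQ₂init
  have := hdisj.mono_inl hB
  have := hQ₁.flip.isIso_fst_of_factors_mono e₁
  have ht₁ : r₁ ≫ h₁ = t₁ := by
    rw [← cancel_mono b₁, Category.assoc, e₁, hQ₁.w]
  have : IsIso (r₁ ≫ h₁) := ht₁ ▸ inferInstance
  exact IsIso.of_isIso_comp_left r₁ h₁

end CoproductsDisjoint

theorem satE1_implies_extensive_general
    (hdisj : ∀ {X₁ X₂ X : C} (ι₁ : X₁ ⟶ X) (ι₂ : X₂ ⟶ X), IsCoprodDiagram ι₁ ι₂ →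
      Mono ι₁ ∧ Mono ι₂ ∧
      ∃ (P : C) (p₁ : P ⟶ X₁) (p₂ : P ⟶ X₂),
        IsPullback p₁ p₂ ι₁ ι₂ ∧ Nonempty (IsInitial P))
    (hE1 : ∀ {A X : C} (ι : A ⟶ X), IsCoprodInclusion ι → SatE1 ι) :
    ∀ {A X : C} (f : A ⟶ X), SatE1 f → Extensive f := by
  intro A X f hf
  refine ⟨hf, fun a₁ a₂ x₁ x₂ f₁ f₂ w₁ w₂ hX hA => ?_⟩
  have hdisj' : CoproductsDisjoint C := @hdisj
  obtain ⟨B₁, B₂, b₁, b₂, g₁, g₂, hB₁, hB₂, hB⟩ := hf x₁ x₂ hX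
  have hE1_inl {Y₁ Y₂ Y : C} {ι₁ : Y₁ ⟶ Y} {ι₂ : Y₂ ⟶ Y} (h : IsCoprodDiagram ι₁ ι₂) :
      SatE1 ι₁ := hE1 ι₁ ⟨_, ι₂, h⟩
  have : IsIso (hB₁.lift a₁ f₁ w₁) := hdisj'.isIso_of_comp_inl_eq_inl hA hB
    (hE1_inl hA.swap) (hE1_inl hB) (hB₁.lift_fst _ _ _) (hB₂.lift_fst a₂ f₂ w₂)
  have : IsIso (hB₂.lift a₂ f₂ w₂) := hdisj'.isIso_of_comp_inl_eq_inl hA.swap hB.swap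
    (hE1_inl hA) (hE1_inl hB.swap) (hB₂.lift_fst _ _ _) (hB₁.lift_fst a₁ f₁ w₁)
  exact ⟨hB₁.of_isIso_lift w₁, hB₂.of_isIso_lift w₂⟩

/-- In a category with an initial object and binary coproducts where coproducts are
disjoint and all coproduct inclusions satisfy (E1), every morphism satisfying (E1) is
extensive. -/
theorem satE1_implies_extensive [HasInitial C] [HasBinaryCoproducts C]
    (hdisj : ∀ {X₁ X₂ X : C} (ι₁ : X₁ ⟶ X) (ι₂ : X₂ ⟶ X), IsCoprodDiagram ι₁ ι₂ →
      Mono ι₁ ∧ Mono ι₂ ∧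
      ∃ (P : C) (p₁ : P ⟶ X₁) (p₂ : P ⟶ X₂),
        IsPullback p₁ p₂ ι₁ ι₂ ∧ Nonempty (IsInitial P))
    (hE1 : ∀ {A X : C} (ι : A ⟶ X), IsCoprodInclusion ι → SatE1 ι) :
    ∀ {A X : C} (f : A ⟶ X), SatE1 f → Extensive f :=
  satE1_implies_extensive_general hdisj hE1
end

section
/- Let C be a category with binary coproducts in which every coproduct inclusion is extensive. Then the pullback of any extensive morphism along a coproduct inclusion exists and is again extensive: if f : A → B is extensive and b₁ : B₁ → B is a coproduct inclusion, then the pullback f₁ : A₁ → B₁ of f along b₁ is extensive. -/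
open CategoryTheory CategoryTheory.Limits

universe v u

variable {C : Type u} [Category.{v} C]

/-!
Write `B = B₁ ⊔ B₂`. By (E1) for `f`, the pullback `A₁` of `f` along `b₁` is a summand
`A = A₁ ⊔ A₂`, so `a₁` and `b₁` are extensive by hypothesis. The composite `f₁ ≫ b₁ = a₁ ≫ f`
satisfies (E1) as a composite of maps satisfying (E1), and (E1) descends from `f₁ ≫ b₁` to `f₁`
because (E2) for `b₁` lets pullbacks along summands of `B₁` be computed over `B`. (E2) for `f₁`
follows from (E2) for `f` by gluing on the complementary square `A₂ → B₂` and cancelling the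
pullback square `A₁ → A`.
-/

namespace IsCoprodDiagram

variable {X₁ X₂ X : C} {i₁ : X₁ ⟶ X} {i₂ : X₂ ⟶ X}

lemma iff_existsUnique : IsCoprodDiagram i₁ i₂ ↔
    ∀ {T : C} (g₁ : X₁ ⟶ T) (g₂ : X₂ ⟶ T), ∃! d : X ⟶ T, i₁ ≫ d = g₁ ∧ i₂ ≫ d = g₂ := by
  refine ⟨fun ⟨h⟩ T g₁ g₂ => ⟨h.desc (BinaryCofan.mk g₁ g₂),
      ⟨h.fac (BinaryCofan.mk g₁ g₂) ⟨.left⟩, h.fac (BinaryCofan.mk g₁ g₂) ⟨.right⟩⟩,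
      fun d ⟨hd₁, hd₂⟩ => ?_⟩, fun h => ?_⟩
  · exact BinaryCofan.IsColimit.hom_ext h (hd₁.trans (h.fac (BinaryCofan.mk g₁ g₂) ⟨.left⟩).symm)
      (hd₂.trans (h.fac (BinaryCofan.mk g₁ g₂) ⟨.right⟩).symm)
  · choose d hd huniq using fun {T : C} (g₁ : X₁ ⟶ T) (g₂ : X₂ ⟶ T) => h g₁ g₂
    exact ⟨BinaryCofan.isColimitMk (fun s => d s.inl s.inr) (fun s => (hd s.inl s.inr).1)
      (fun s => (hd s.inl s.inr).2) (fun s m hm₁ hm₂ => huniq s.inl s.inr m ⟨hm₁, hm₂⟩)⟩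

lemma swap_s14 (h : IsCoprodDiagram i₁ i₂) : IsCoprodDiagram i₂ i₁ :=
  ⟨BinaryCofan.isColimitFlip h.some⟩

lemma iso_hom_comp {X₁' : C} (e : X₁' ≅ X₁) (h : IsCoprodDiagram i₁ i₂) :
    IsCoprodDiagram (e.hom ≫ i₁) i₂ :=
  ⟨BinaryCofan.isColimitCompLeftIso _ e.hom h.some⟩

lemma assoc [HasBinaryCoproducts C] {B₂ B : C} {b₁ : X ⟶ B} {b₂ : B₂ ⟶ B}
    (hi : IsCoprodDiagram i₁ i₂) (hb : IsCoprodDiagram b₁ b₂) :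
    IsCoprodDiagram (i₁ ≫ b₁) (coprod.desc (i₂ ≫ b₁) b₂) := by
  rw [iff_existsUnique] at hi hb ⊢
  intro T g₁ g₂
  obtain ⟨d₁, ⟨hd₁, hd₂⟩, huniq₁⟩ := hi g₁ (coprod.inl ≫ g₂)
  obtain ⟨d, ⟨hd, hd'⟩, huniq⟩ := hb d₁ (coprod.inr ≫ g₂)
  refine ⟨d, ⟨by simp [hd, hd₁],
    by ext <;> simp [coprod.inl_desc, coprod.inr_desc, hd, hd₂, hd']⟩, ?_⟩
  rintro m ⟨hm₁, hm₂⟩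
  refine huniq m ⟨huniq₁ _ ⟨by simpa using hm₁, ?_⟩, ?_⟩ <;>
    simp [← hm₂, coprod.inl_desc, coprod.inr_desc]

end IsCoprodDiagram

namespace CategoryTheory.IsPullback

lemma exists_of_bot {R A₁ Y B₁ W B : C} {r : R ⟶ A₁} {g : R ⟶ W} {f : A₁ ⟶ B₁}
    {b : B₁ ⟶ B} {y : Y ⟶ B₁} {k : Y ⟶ W} {z : W ⟶ B}
    (hR : IsPullback r g (f ≫ b) z) (hY : IsPullback y k b z) :
    ∃ g' : R ⟶ Y, IsPullback r g' f y := by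
  refine ⟨hY.lift (r ≫ f) g (by simpa using hR.w), IsPullback.of_bot ?_ (by simp) hY⟩
  simpa using hR

end CategoryTheory.IsPullback

section Extensive

variable {A B : C} {f : A ⟶ B}

lemma SatE1.comp {E : C} {g : B ⟶ E} (hf : SatE1 f) (hg : SatE1 g) : SatE1 (f ≫ g) := by
  intro X₁ X₂ x₁ x₂ hX
  obtain ⟨B₁, B₂, b₁, b₂, g₁, g₂, hb₁, hb₂, hB⟩ := hg x₁ x₂ hX
  obtain ⟨A₁, A₂, a₁, a₂, f₁, f₂, ha₁, ha₂, hA⟩ := hf b₁ b₂ hB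
  exact ⟨A₁, A₂, a₁, a₂, f₁ ≫ g₁, f₂ ≫ g₂, ha₁.paste_vert hb₁, ha₂.paste_vert hb₂, hA⟩

/-- A decomposition `B₁ = Y₁ ⊔ Y₂` extends to `B = Y₁ ⊔ (Y₂ ⊔ B₂)`, and (E2) for `b` identifies
`Y₁` and `Y₂` with the pullbacks of `b` along the two inclusions of the latter. -/
lemma SatE1.of_comp_of_satE2 [HasBinaryCoproducts C] {B₁ B₂ : C} {f : A ⟶ B₁} {b : B₁ ⟶ B}
    {b₂ : B₂ ⟶ B} (hfb : SatE1 (f ≫ b)) (hb : SatE2 b) (hB : IsCoprodDiagram b b₂) :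
    SatE1 f := by
  intro Y₁ Y₂ y₁ y₂ hY
  have hYB := hY.assoc hB
  obtain ⟨hY₁, hY₂⟩ :=
    hb y₁ y₂ (y₁ ≫ b) (coprod.desc (y₂ ≫ b) b₂) (𝟙 Y₁) coprod.inl (by simp)
      (coprod.inl_desc _ _).symm hYB hY
  obtain ⟨R₁, R₂, r₁, r₂, g₁, g₂, hR₁, hR₂, hR⟩ := hfb _ _ hYB
  obtain ⟨g₁', hg₁⟩ := hR₁.exists_of_bot hY₁
  obtain ⟨g₂', hg₂⟩ := hR₂.exists_of_bot hY₂
  exact ⟨R₁, R₂, r₁, r₂, g₁', g₂', hg₁, hg₂, hR⟩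

lemma SatE1.exists_isCoprodDiagram_of_isPullback (hf : SatE1 f) {A₁ B₁ B₂ : C}
    {a₁ : A₁ ⟶ A} {f₁ : A₁ ⟶ B₁} {b₁ : B₁ ⟶ B} {b₂ : B₂ ⟶ B}
    (hB : IsCoprodDiagram b₁ b₂) (pb : IsPullback a₁ f₁ f b₁) :
    ∃ (A₂ : C) (a₂ : A₂ ⟶ A) (f₂ : A₂ ⟶ B₂), IsPullback a₂ f₂ f b₂ ∧ IsCoprodDiagram a₁ a₂ := by
  obtain ⟨A₁', A₂, a₁', a₂, f₁', f₂, pb', pb₂, hA⟩ := hf b₁ b₂ hB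
  refine ⟨A₂, a₂, f₂, pb₂, ?_⟩
  simpa using hA.iso_hom_comp (pb.isoIsPullback _ _ pb')

/-- Gluing the given diagram over `f₁` with the square `a₂, f₂` presents it as the first square
of a diagram over `f` with rows `A = U₁ ⊔ (U₂ ⊔ A₂)` and `B = Y₁ ⊔ (Y₂ ⊔ B₂)`. -/
lemma SatE2.isPullback_fst_of_isPullback [HasBinaryCoproducts C] (hf : SatE2 f)
    {A₁ A₂ B₁ B₂ U₁ U₂ Y₁ Y₂ : C} {a₁ : A₁ ⟶ A} {a₂ : A₂ ⟶ A} {b₁ : B₁ ⟶ B} {b₂ : B₂ ⟶ B}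
    {f₁ : A₁ ⟶ B₁} {f₂ : A₂ ⟶ B₂} {u₁ : U₁ ⟶ A₁} {u₂ : U₂ ⟶ A₁} {y₁ : Y₁ ⟶ B₁}
    {y₂ : Y₂ ⟶ B₁} {h₁ : U₁ ⟶ Y₁} {h₂ : U₂ ⟶ Y₂}
    (pb : IsPullback a₁ f₁ f b₁) (w₂ : a₂ ≫ f = f₂ ≫ b₂)
    (hA : IsCoprodDiagram a₁ a₂) (hB : IsCoprodDiagram b₁ b₂)
    (w₁' : u₁ ≫ f₁ = h₁ ≫ y₁) (w₂' : u₂ ≫ f₁ = h₂ ≫ y₂)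
    (hU : IsCoprodDiagram u₁ u₂) (hY : IsCoprodDiagram y₁ y₂) :
    IsPullback u₁ h₁ f₁ y₁ := by
  have w : ∀ {U Y : C} {u : U ⟶ A₁} {y : Y ⟶ B₁} {h : U ⟶ Y}, u ≫ f₁ = h ≫ y →
      (u ≫ a₁) ≫ f = h ≫ y ≫ b₁ := fun e => by
    rw [Category.assoc, pb.w, reassoc_of% e]
  have hglued := hf (u₁ ≫ a₁) (coprod.desc (u₂ ≫ a₁) a₂) (y₁ ≫ b₁) (coprod.desc (y₂ ≫ b₁) b₂)
    h₁ (coprod.map h₂ f₂) (w w₁') (by ext <;> simp [w w₂', w₂]) (hY.assoc hB) (hU.assoc hA)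
  exact IsPullback.of_right hglued.1 w₁' pb

lemma SatE2.of_isPullback [HasBinaryCoproducts C] (hf : SatE2 f) {A₁ A₂ B₁ B₂ : C}
    {a₁ : A₁ ⟶ A} {a₂ : A₂ ⟶ A} {b₁ : B₁ ⟶ B} {b₂ : B₂ ⟶ B} {f₁ : A₁ ⟶ B₁} {f₂ : A₂ ⟶ B₂}
    (pb : IsPullback a₁ f₁ f b₁) (w₂ : a₂ ≫ f = f₂ ≫ b₂)
    (hA : IsCoprodDiagram a₁ a₂) (hB : IsCoprodDiagram b₁ b₂) : SatE2 f₁ :=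
  fun {_ _ _ _} _ _ _ _ _ _ w₁' w₂' hY hU =>
    ⟨SatE2.isPullback_fst_of_isPullback hf pb w₂ hA hB w₁' w₂' hU hY,
      SatE2.isPullback_fst_of_isPullback hf pb w₂ hA hB w₂' w₁' hU.swap_s14 hY.swap_s14⟩

end Extensive

/-- If every coproduct inclusion is extensive, then the pullback of an extensive morphism
along a coproduct inclusion exists and is extensive. -/
theorem pullback_of_extensive_along_inclusion [HasBinaryCoproducts C]
    (hinc : ∀ {A X : C} (ι : A ⟶ X), IsCoprodInclusion ι → Extensive ι)
    {A B B₁ : C} (f : A ⟶ B) (hf : Extensive f)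
    (b₁ : B₁ ⟶ B) (hb : IsCoprodInclusion b₁) :
    (∃ (A₁ : C) (a₁ : A₁ ⟶ A) (f₁ : A₁ ⟶ B₁), IsPullback a₁ f₁ f b₁) ∧
    (∀ {A₁ : C} (a₁ : A₁ ⟶ A) (f₁ : A₁ ⟶ B₁), IsPullback a₁ f₁ f b₁ → Extensive f₁) := by
  obtain ⟨B₂, b₂, hB⟩ := hb
  obtain ⟨A₁, -, a₁, -, f₁, -, pb, -⟩ := hf.1 b₁ b₂ hB
  refine ⟨⟨A₁, a₁, f₁, pb⟩, fun a₁ f₁ pb => ?_⟩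
  obtain ⟨A₂, a₂, f₂, pb₂, hA⟩ := SatE1.exists_isCoprodDiagram_of_isPullback hf.1 hB pb
  have hcomp : SatE1 (f₁ ≫ b₁) := pb.w ▸ SatE1.comp (hinc a₁ ⟨A₂, a₂, hA⟩).1 hf.1
  exact ⟨SatE1.of_comp_of_satE2 hcomp (hinc b₁ ⟨B₂, b₂, hB⟩).2 hB,
    SatE2.of_isPullback hf.2 pb pb₂.w hA hB⟩
end

section
/- In any category, consider morphisms u₁, v₁ : C₁ → X₁, u₂, v₂ : C₂ → X₂, e : C₁ → C₂, f : X₁ → X₂, q₁ : X₁ → Q₁, q₂ : X₂ → Q₂, g : Q₁ → Q₂ satisfying f ∘ u₁ = u₂ ∘ e, f ∘ v₁ = v₂ ∘ e, and g ∘ q₁ = q₂ ∘ f. If q₁ is a coequaliser of u₁ and v₁, and e is an epimorphism, then the square with sides f, q₁, q₂, g is a pushout if and only if q₂ is a coequaliser of u₂ and v₂. -/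
open CategoryTheory CategoryTheory.Limits

universe v u

variable {C : Type u} [Category.{v} C]

/-! Since `e` is an epimorphism, a map out of `X₂` coequalises `u₂, v₂` iff it coequalises
`e ≫ u₂ = u₁ ≫ f` and `e ≫ v₂ = v₁ ≫ f`, so being a coequaliser of either pair is the same
universal property. A cocone `(a, k)` on the span `Q₁ ← X₁ → X₂` amounts to a map `k` out of `X₂`
coequalising `u₁ ≫ f, v₁ ≫ f`: the coequaliser `q₁` provides `a`, and is epi, so `a` is unique.
Hence the square is a pushout iff `q₂` is a coequaliser of that pair. -/

def IsCoequalizer {W X Q : C} (u v : W ⟶ X) (q : X ⟶ Q) : Prop :=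
  ∃ w : u ≫ q = v ≫ q, Nonempty (IsColimit (Cofork.ofπ q w))

theorem isCoequalizer_iff {W X Q : C} {u v : W ⟶ X} {q : X ⟶ Q} :
    IsCoequalizer u v q ↔
      u ≫ q = v ≫ q ∧ ∀ {T : C} (k : X ⟶ T), u ≫ k = v ≫ k → ∃! d : Q ⟶ T, q ≫ d = k := by
  constructor
  · rintro ⟨w, ⟨hq⟩⟩
    exact ⟨w, fun k hk => Cofork.IsColimit.existsUnique hq k hk⟩
  · rintro ⟨w, hq⟩
    exact ⟨w, ⟨Cofork.IsColimit.ofExistsUnique fun s => hq s.π s.condition⟩⟩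

theorem isCoequalizer_epi_comp_iff {W' W X Q : C} (e : W' ⟶ W) [Epi e] {u v : W ⟶ X}
    {q : X ⟶ Q} : IsCoequalizer (e ≫ u) (e ≫ v) q ↔ IsCoequalizer u v q := by
  simp only [isCoequalizer_iff, Category.assoc, cancel_epi]

theorem IsCoequalizer.epi {W X Q : C} {u v : W ⟶ X} {q : X ⟶ Q} (hq : IsCoequalizer u v q) :
    Epi q :=
  let ⟨_, ⟨hq⟩⟩ := hq
  Cofork.IsColimit.epi hq

theorem isPushout_iff_isCoequalizer_comp {W X₁ X₂ Q₁ Q₂ : C} {u v : W ⟶ X₁} {f : X₁ ⟶ X₂}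
    {q₁ : X₁ ⟶ Q₁} {q₂ : X₂ ⟶ Q₂} {g : Q₁ ⟶ Q₂} (hq₁ : IsCoequalizer u v q₁)
    (hsq : q₁ ≫ g = f ≫ q₂) :
    IsPushout q₁ f g q₂ ↔ IsCoequalizer (u ≫ f) (v ≫ f) q₂ := by
  obtain ⟨hw₁, factor⟩ := isCoequalizer_iff.mp hq₁
  have := hq₁.epi
  have coequalizes {T : C} {a : Q₁ ⟶ T} {k : X₂ ⟶ T} (h : q₁ ≫ a = f ≫ k) :
      (u ≫ f) ≫ k = (v ≫ f) ≫ k := by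
    simp only [Category.assoc, ← h, reassoc_of% hw₁]
  constructor
  · intro hpo
    refine isCoequalizer_iff.mpr ⟨coequalizes hsq, fun k hk => ?_⟩
    obtain ⟨a, ha, -⟩ := factor (f ≫ k) (by simpa only [Category.assoc] using hk)
    refine ⟨hpo.desc a k ha, hpo.inr_desc a k ha, fun d hd => hpo.hom_ext ?_ ?_⟩
    · rw [← cancel_epi q₁, reassoc_of% hsq, hd, hpo.inl_desc, ha]
    · rw [hd, hpo.inr_desc]
  · rintro ⟨w₂, ⟨hq₂⟩⟩
    let desc (s : PushoutCocone q₁ f) : Q₂ ⟶ s.pt :=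
      Cofork.IsColimit.desc hq₂ s.inr (coequalizes s.condition)
    have inr_desc (s : PushoutCocone q₁ f) : q₂ ≫ desc s = s.inr :=
      Cofork.IsColimit.π_desc' hq₂ _ _
    refine .of_isColimit (PushoutCocone.IsColimit.mk hsq desc (fun s => ?_) inr_desc
      fun s m _ hm => Cofork.IsColimit.hom_ext hq₂ (hm.trans (inr_desc s).symm))
    rw [← cancel_epi q₁, reassoc_of% hsq, inr_desc, s.condition]

/-- The common-coequaliser lemma: given the commutative ladder with `q₁` a coequaliser of
`u₁, v₁` and `e` an epimorphism, the right-hand square is a pushout iff `q₂` is a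
coequaliser of `u₂, v₂`. -/
theorem pushout_iff_coequalizer {W₁ W₂ X₁ X₂ Q₁ Q₂ : C}
    (u₁ v₁ : W₁ ⟶ X₁) (u₂ v₂ : W₂ ⟶ X₂) (e : W₁ ⟶ W₂) (f : X₁ ⟶ X₂)
    (q₁ : X₁ ⟶ Q₁) (q₂ : X₂ ⟶ Q₂) (g : Q₁ ⟶ Q₂)
    (hu : u₁ ≫ f = e ≫ u₂) (hv : v₁ ≫ f = e ≫ v₂) (hsq : q₁ ≫ g = f ≫ q₂)
    (hw₁ : u₁ ≫ q₁ = v₁ ≫ q₁)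
    (hq₁ : Nonempty (IsColimit (Cofork.ofπ q₁ hw₁)))
    (he : Epi e) :
    IsPushout q₁ f g q₂ ↔
      ∃ (w : u₂ ≫ q₂ = v₂ ≫ q₂), Nonempty (IsColimit (Cofork.ofπ q₂ w)) := by
  rw [isPushout_iff_isCoequalizer_comp ⟨hw₁, hq₁⟩ hsq, hu, hv]
  exact isCoequalizer_epi_comp_iff e
end

section
/- Let C be a category with finite products and a terminal object 1 in which every binary product projection is a regular epimorphism. Then binary products in C are co-disjoint: for any objects X and Y, the square consisting of the projections π₁ : X × Y → X, π₂ : X × Y → Y and the terminal morphisms X → 1, Y → 1 is a pushout. -/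
open CategoryTheory CategoryTheory.Limits

universe v u

variable {C : Type u} [Category.{v} C]

lemma isProdDiagram_id_terminal_from [HasTerminal C] (P : C) :
    IsProdDiagram (𝟙 P) (terminal.from P) :=
  (BinaryFan.isLimit_iff_isIso_fst terminalIsTerminal _).2 (by dsimp; infer_instance)

lemma comp_eq_comp_of_prod_fst_comp_eq_snd_comp {X Y Q T : C} [HasBinaryProduct X Y]
    {f : X ⟶ Q} {g : Y ⟶ Q} (w : prod.fst ≫ f = prod.snd ≫ g) (u : T ⟶ X) (v : T ⟶ Y) :
    u ≫ f = v ≫ g := by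
  simpa only [← Category.assoc, prod.lift_fst, prod.lift_snd] using prod.lift u v ≫= w

/-- For a cocone `(f, g)` under the projections, `prod.fst ≫ f` agrees with `prod.snd ≫ g` on
any two maps into `X ⨯ Y`, so it coequalises the pair presenting `X ⨯ Y ⟶ ⊤_ C` as a regular
epimorphism and descends to a point `⊤_ C ⟶ Q`. -/
lemma isPushout_prod_fst_snd_terminal_from [HasTerminal C] {X Y : C} [HasBinaryProduct X Y]
    [Epi (prod.fst : X ⨯ Y ⟶ X)] [Epi (prod.snd : X ⨯ Y ⟶ Y)]
    (e : RegularEpi (terminal.from (X ⨯ Y))) :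
    IsPushout prod.fst prod.snd (terminal.from X) (terminal.from Y) := by
  have : Epi ((prod.fst : X ⨯ Y ⟶ X) ≫ terminal.from X) := by
    rw [terminal.comp_from]
    exact e.epi
  have : Epi (terminal.from X) := epi_of_epi (prod.fst : X ⨯ Y ⟶ X) _
  have hcoeq (s : PushoutCocone (prod.fst : X ⨯ Y ⟶ X) prod.snd) :
      e.left ≫ prod.fst ≫ s.inl = e.right ≫ prod.fst ≫ s.inl := by
    simp only [← Category.assoc]
    rw [comp_eq_comp_of_prod_fst_comp_eq_snd_comp s.condition _ (e.left ≫ prod.snd),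
      comp_eq_comp_of_prod_fst_comp_eq_snd_comp s.condition _ (e.left ≫ prod.snd)]
  let desc (s : PushoutCocone (prod.fst : X ⨯ Y ⟶ X) prod.snd) := e.desc' _ (hcoeq s)
  have fac_inl (s : PushoutCocone (prod.fst : X ⨯ Y ⟶ X) prod.snd) :
      terminal.from X ≫ (desc s).1 = s.inl := by
    rw [← cancel_epi (prod.fst : X ⨯ Y ⟶ X), ← Category.assoc, terminal.comp_from, (desc s).2]
  refine IsPushout.of_isColimit' ⟨Subsingleton.elim _ _⟩
    (PushoutCocone.IsColimit.mk _ (fun s => (desc s).1) fac_inl (fun s => ?_)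
      (fun s m hm _ => ?_))
  · rw [← cancel_epi (prod.snd : X ⨯ Y ⟶ Y), ← Category.assoc, terminal.comp_from, (desc s).2,
      s.condition]
  · rw [← cancel_epi (terminal.from X), hm, fac_inl]

/-- If every binary product projection is a regular epimorphism, then binary products are
co-disjoint: the square of projections and terminal morphisms is a pushout. -/
theorem products_codisjoint [HasFiniteProducts C]
    (hproj : ∀ {P X₁ X₂ : C} (p₁ : P ⟶ X₁) (p₂ : P ⟶ X₂),
      IsProdDiagram p₁ p₂ → Nonempty (RegularEpi p₁) ∧ Nonempty (RegularEpi p₂))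
    (X Y : C) :
    IsPushout (Limits.prod.fst : X ⨯ Y ⟶ X) (Limits.prod.snd : X ⨯ Y ⟶ Y)
      (terminal.from X) (terminal.from Y) := by
  obtain ⟨⟨hfst⟩, ⟨hsnd⟩⟩ := hproj prod.fst prod.snd ⟨prodIsProd X Y⟩
  have := hfst.epi
  have := hsnd.epi
  exact isPushout_prod_fst_snd_terminal_from
    (hproj _ _ (isProdDiagram_id_terminal_from (X ⨯ Y))).2.some
end

section
/- Let C be a category with binary coproducts and equalisers in which every coproduct inclusion is a monomorphism and every regular monomorphism is extensive. Then equalisers commute with binary coproducts: given equaliser diagrams e₁ : E₁ → X₁ of f₁, g₁ : X₁ → Y₁ and e₂ : E₂ → X₂ of f₂, g₂ : X₂ → Y₂, the morphism e₁ + e₂ : E₁ + E₂ → X₁ + X₂ is an equaliser of f₁ + f₂ and g₁ + g₂ : X₁ + X₂ → Y₁ + Y₂. -/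
open CategoryTheory CategoryTheory.Limits

universe v u

variable {C : Type u} [Category.{v} C]

/-- If coproduct inclusions are mono and every regular monomorphism is extensive, then
equalisers commute with binary coproducts. -/
theorem equalizers_commute_with_coproducts [HasBinaryCoproducts C] [HasEqualizers C]
    (hmono : ∀ {A X : C} (ι : A ⟶ X), IsCoprodInclusion ι → Mono ι)
    (hreg : ∀ {A X : C} (m : A ⟶ X), Nonempty (RegularMono m) → Extensive m)
    {E₁ E₂ X₁ X₂ Y₁ Y₂ : C} (f₁ g₁ : X₁ ⟶ Y₁) (f₂ g₂ : X₂ ⟶ Y₂)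
    (e₁ : E₁ ⟶ X₁) (e₂ : E₂ ⟶ X₂)
    (w₁ : e₁ ≫ f₁ = e₁ ≫ g₁) (w₂ : e₂ ≫ f₂ = e₂ ≫ g₂)
    (h₁ : Nonempty (IsLimit (Fork.ofι e₁ w₁)))
    (h₂ : Nonempty (IsLimit (Fork.ofι e₂ w₂))) :
    ∃ (w : coprod.map e₁ e₂ ≫ coprod.map f₁ f₂ = coprod.map e₁ e₂ ≫ coprod.map g₁ g₂),
      Nonempty (IsLimit (Fork.ofι (coprod.map e₁ e₂) w)) := by
  classical
  have w : coprod.map e₁ e₂ ≫ coprod.map f₁ f₂ = coprod.map e₁ e₂ ≫ coprod.map g₁ g₂ := by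
    ext
    · simp [w₁]
    · simp [w₂]
  refine ⟨w, ?_⟩
  set F := coprod.map f₁ f₂ with hF
  set G := coprod.map g₁ g₂ with hG
  let e : equalizer F G ⟶ X₁ ⨿ X₂ := equalizer.ι F G
  have hext : Extensive e := hreg e ⟨RegularMono.equalizer F G⟩
  obtain ⟨A₁, A₂, a₁, a₂, q₁, q₂, pb₁, pb₂, ⟨hcop⟩⟩ :=
    hext.1 coprod.inl coprod.inr ⟨coprodIsCoprod X₁ X₂⟩
  have monoInlY : Mono (coprod.inl : Y₁ ⟶ Y₁ ⨿ Y₂) :=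
    hmono _ ⟨Y₂, coprod.inr, ⟨coprodIsCoprod _ _⟩⟩
  have monoInrY : Mono (coprod.inr : Y₂ ⟶ Y₁ ⨿ Y₂) :=
    hmono _ ⟨Y₁, coprod.inl, ⟨BinaryCofan.isColimitFlip
      (c := BinaryCofan.mk coprod.inl coprod.inr) (coprodIsCoprod Y₁ Y₂)⟩⟩
  have monoA₁ : Mono a₁ := hmono a₁ ⟨A₂, a₂, ⟨hcop⟩⟩
  have monoE₁ : Mono e₁ := by
    constructor
    intro Z u v huv
    exact Fork.IsLimit.hom_ext h₁.some huv
  have monoE₂ : Mono e₂ := by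
    constructor
    intro Z u v huv
    exact Fork.IsLimit.hom_ext h₂.some huv
  have hec : e ≫ F = e ≫ G := equalizer.condition F G
  -- q₁ equalizes f₁ g₁
  have hq₁ : q₁ ≫ f₁ = q₁ ≫ g₁ := by
    rw [← cancel_mono (coprod.inl : Y₁ ⟶ Y₁ ⨿ Y₂)]
    have : q₁ ≫ coprod.inl ≫ F = q₁ ≫ coprod.inl ≫ G := by
      rw [← Category.assoc, ← pb₁.w, Category.assoc, hec, ← Category.assoc, pb₁.w,
        Category.assoc]
    simpa [hF, hG] using this
  have hq₂ : q₂ ≫ f₂ = q₂ ≫ g₂ := by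
    rw [← cancel_mono (coprod.inr : Y₂ ⟶ Y₁ ⨿ Y₂)]
    have : q₂ ≫ coprod.inr ≫ F = q₂ ≫ coprod.inr ≫ G := by
      rw [← Category.assoc, ← pb₂.w, Category.assoc, hec, ← Category.assoc, pb₂.w,
        Category.assoc]
    simpa [hF, hG] using this
  obtain ⟨u₁, hu₁⟩ : ∃ u : A₁ ⟶ E₁, u ≫ e₁ = q₁ :=
    ⟨(Fork.IsLimit.lift' h₁.some q₁ hq₁).1, (Fork.IsLimit.lift' h₁.some q₁ hq₁).2⟩
  obtain ⟨u₂, hu₂⟩ : ∃ u : A₂ ⟶ E₂, u ≫ e₂ = q₂ :=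
    ⟨(Fork.IsLimit.lift' h₂.some q₂ hq₂).1, (Fork.IsLimit.lift' h₂.some q₂ hq₂).2⟩
  -- maps E₁ → equalizer
  have hv₁c : (e₁ ≫ coprod.inl) ≫ F = (e₁ ≫ coprod.inl) ≫ G := by
    simp [hF, hG, reassoc_of% w₁]
  have hv₂c : (e₂ ≫ coprod.inr) ≫ F = (e₂ ≫ coprod.inr) ≫ G := by
    simp [hF, hG, reassoc_of% w₂]
  let v₁ : E₁ ⟶ equalizer F G := equalizer.lift _ hv₁c
  let v₂ : E₂ ⟶ equalizer F G := equalizer.lift _ hv₂c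
  have hv₁ : v₁ ≫ e = e₁ ≫ coprod.inl := equalizer.lift_ι _ _
  have hv₂ : v₂ ≫ e = e₂ ≫ coprod.inr := equalizer.lift_ι _ _
  let t₁ : E₁ ⟶ A₁ := pb₁.lift v₁ e₁ hv₁
  let t₂ : E₂ ⟶ A₂ := pb₂.lift v₂ e₂ hv₂
  have ht₁a : t₁ ≫ a₁ = v₁ := pb₁.lift_fst _ _ _
  have ht₁q : t₁ ≫ q₁ = e₁ := pb₁.lift_snd _ _ _
  have ht₂a : t₂ ≫ a₂ = v₂ := pb₂.lift_fst _ _ _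
  have ht₂q : t₂ ≫ q₂ = e₂ := pb₂.lift_snd _ _ _
  have htu₁ : t₁ ≫ u₁ = 𝟙 E₁ := by
    rw [← cancel_mono e₁]; rw [Category.assoc, hu₁, ht₁q, Category.id_comp]
  have htu₂ : t₂ ≫ u₂ = 𝟙 E₂ := by
    rw [← cancel_mono e₂]; rw [Category.assoc, hu₂, ht₂q, Category.id_comp]
  have monoQ₁ : Mono q₁ := by
    haveI : Mono (q₁ ≫ (coprod.inl : X₁ ⟶ X₁ ⨿ X₂)) := by
      rw [← pb₁.w]; exact mono_comp a₁ e
    exact mono_of_mono q₁ (coprod.inl : X₁ ⟶ X₁ ⨿ X₂)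
  have monoA₂ : Mono a₂ := hmono a₂ ⟨A₁, a₁, ⟨BinaryCofan.isColimitFlip (c := BinaryCofan.mk a₁ a₂) hcop⟩⟩
  have monoQ₂ : Mono q₂ := by
    haveI : Mono (q₂ ≫ (coprod.inr : X₂ ⟶ X₁ ⨿ X₂)) := by
      rw [← pb₂.w]; exact mono_comp a₂ e
    exact mono_of_mono q₂ (coprod.inr : X₂ ⟶ X₁ ⨿ X₂)
  have hut₁ : u₁ ≫ t₁ = 𝟙 A₁ := by
    rw [← cancel_mono q₁]; rw [Category.assoc, ht₁q, hu₁, Category.id_comp]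
  have hut₂ : u₂ ≫ t₂ = 𝟙 A₂ := by
    rw [← cancel_mono q₂]; rw [Category.assoc, ht₂q, hu₂, Category.id_comp]
  -- the comparison iso
  obtain ⟨φ, hφ₁, hφ₂⟩ : ∃ φ : E₁ ⨿ E₂ ⟶ equalizer F G,
      coprod.inl ≫ φ = t₁ ≫ a₁ ∧ coprod.inr ≫ φ = t₂ ≫ a₂ :=
    ⟨coprod.desc (t₁ ≫ a₁) (t₂ ≫ a₂), coprod.inl_desc _ _, coprod.inr_desc _ _⟩
  obtain ⟨ψ, hψ₁, hψ₂⟩ : ∃ ψ : equalizer F G ⟶ E₁ ⨿ E₂,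
      a₁ ≫ ψ = u₁ ≫ coprod.inl ∧ a₂ ≫ ψ = u₂ ≫ coprod.inr :=
    ⟨hcop.desc (BinaryCofan.mk (u₁ ≫ coprod.inl) (u₂ ≫ coprod.inr)),
      hcop.fac _ ⟨WalkingPair.left⟩,
      hcop.fac _ ⟨WalkingPair.right⟩⟩
  have hφψ : φ ≫ ψ = 𝟙 _ := by
    apply coprod.hom_ext
    · rw [← Category.assoc, hφ₁, Category.assoc, hψ₁, reassoc_of% htu₁,
        Category.comp_id]
    · rw [← Category.assoc, hφ₂, Category.assoc, hψ₂, reassoc_of% htu₂,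
        Category.comp_id]
  have hψφ : ψ ≫ φ = 𝟙 _ := by
    apply BinaryCofan.IsColimit.hom_ext hcop
    · show a₁ ≫ ψ ≫ φ = a₁ ≫ 𝟙 _
      rw [Category.comp_id, ← Category.assoc, hψ₁, Category.assoc, hφ₁]
      rw [reassoc_of% hut₁]
    · show a₂ ≫ ψ ≫ φ = a₂ ≫ 𝟙 _
      rw [Category.comp_id, ← Category.assoc, hψ₂, Category.assoc, hφ₂]
      rw [reassoc_of% hut₂]
  have hφe : φ ≫ e = coprod.map e₁ e₂ := by
    apply coprod.hom_ext
    · rw [← Category.assoc, hφ₁, Category.assoc, reassoc_of% ht₁a, hv₁,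
        coprod.inl_map]
    · rw [← Category.assoc, hφ₂, Category.assoc, reassoc_of% ht₂a, hv₂,
        coprod.inr_map]
  have monoMap : Mono (coprod.map e₁ e₂) := by
    rw [← hφe]
    have : IsIso φ := ⟨ψ, hφψ, hψφ⟩
    exact mono_comp φ e
  refine ⟨Fork.IsLimit.mk _ (fun s => equalizer.lift s.ι s.condition ≫ ψ) ?_ ?_⟩
  · intro s
    show (equalizer.lift s.ι s.condition ≫ ψ) ≫ coprod.map e₁ e₂ = s.ι
    rw [← hφe, Category.assoc, reassoc_of% hψφ, equalizer.lift_ι]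
  · intro s m hm
    rw [← cancel_mono (coprod.map e₁ e₂)]
    have hm' : m ≫ coprod.map e₁ e₂ = s.ι := hm
    rw [hm']
    show s.ι = (equalizer.lift s.ι s.condition ≫ ψ) ≫ coprod.map e₁ e₂
    rw [← hφe, Category.assoc, reassoc_of% hψφ, equalizer.lift_ι]
end
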